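/- Let z be a standard circularly symmetric complex Gaussian with density (1/π)e^{−|z|²}, let M ≥ 2, and let x̂(z) be a nearest point to z in the M-PSK constellation 𝕏_M = {e^{i2πk/M}}. Then E[ Re( z̄ · x̂(z) ) ] = M·sin(π/M) / (2√π). -/

import Mathlib

/-!
Each constellation point has modulus one, so `‖z - x‖² = ‖z‖² - 2 Re(z̄ x) + 1` and a nearest
point maximises `Re(z̄ x)`. Writing `z = r e^{iθ}` this maximum is `r S(θ)` with
`S(θ) = max_k cos(θ - 2πk/M)`, so in polar coordinates the expectation splits into the radial
moment `∫₀^∞ r² e^{-r²} dr = √π/4` times `(1/π) ∫_{-π}^{π} S`. The function `S` is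
`2π/M`-periodic and equals `cos` on `[-π/M, π/M]`, hence `∫_{-π}^{π} S = M · 2 sin(π/M)`.
-/

open MeasureTheory Set Real Complex
open scoped ComplexConjugate

noncomputable def pskConstellation (M : ℕ) : Set ℂ :=
  {x : ℂ | ∃ k : ℕ, k < M ∧ x = Complex.exp (Complex.I * (2 * Real.pi * k / M))}

/-- Indexing by all of `ℤ` rather than by `k < M` makes the `2π/M`-periodicity a mere
reindexing `k ↦ k + 1`. -/
noncomputable def pskMaxCos (M : ℕ) (θ : ℝ) : ℝ :=
  ⨆ k : ℤ, Real.cos (θ - 2 * π * k / M)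

lemma Complex.re_conj_mul_le_of_norm_sub_le {z x y : ℂ} (hxy : ‖x‖ = ‖y‖)
    (h : ‖z - x‖ ≤ ‖z - y‖) : (conj z * y).re ≤ (conj z * x).re := by
  have hsq : normSq (z - x) ≤ normSq (z - y) := by
    rw [← Complex.sq_norm, ← Complex.sq_norm]; gcongr
  have hnormSq : normSq x = normSq y := by rw [← Complex.sq_norm, ← Complex.sq_norm, hxy]
  rw [normSq_sub, normSq_sub] at hsq
  simp only [mul_re, conj_re, conj_im] at hsq ⊢
  linarith

lemma Complex.re_conj_mul_exp_mul_I (r θ φ : ℝ) :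
    (conj (r * exp (θ * I)) * exp (φ * I)).re = r * Real.cos (θ - φ) := by
  rw [map_mul, conj_ofReal, ← exp_conj, map_mul, conj_ofReal, conj_I, mul_assoc, ← exp_add,
    show (θ : ℂ) * -I + φ * I = ((φ - θ : ℝ) : ℂ) * I by push_cast; ring,
    re_ofReal_mul, exp_ofReal_mul_I_re, ← Real.cos_neg, neg_sub]

lemma Real.exists_cos_sub_two_pi_mul_int_div_eq {M : ℕ} (hM : 0 < M) (θ : ℝ) (k : ℤ) :
    ∃ n : ℕ, n < M ∧ Real.cos (θ - 2 * π * k / M) = Real.cos (θ - 2 * π * n / M) := by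
  have hM' : (0 : ℤ) < M := by exact_mod_cast hM
  refine ⟨(k % M).toNat, by have := Int.emod_lt_of_pos k hM'; omega, ?_⟩
  have hk : ((k % M).toNat : ℝ) = ((k % M : ℤ) : ℝ) := by
    exact_mod_cast Int.toNat_of_nonneg (Int.emod_nonneg k hM'.ne')
  have hdiv : (k : ℝ) = ((k % M : ℤ) : ℝ) + M * ((k / M : ℤ) : ℝ) := by
    exact_mod_cast (Int.emod_add_mul_ediv k M).symm
  have harg : θ - 2 * π * k / M = θ - 2 * π * ((k % M).toNat : ℝ) / M - (k / M : ℤ) * (2 * π) := by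
    rw [hk, hdiv]
    field_simp
    ring
  rw [harg, Real.cos_sub_int_mul_two_pi]

lemma Real.cos_le_cos_of_le_of_le_two_pi_sub {a y : ℝ} (ha : 0 ≤ a) (hay : a ≤ y)
    (hy : y ≤ 2 * π - a) : Real.cos y ≤ Real.cos a := by
  rcases le_total y π with h | h
  · exact Real.cos_le_cos_of_nonneg_of_le_pi ha h hay
  · rw [← Real.cos_two_pi_sub y]
    exact Real.cos_le_cos_of_nonneg_of_le_pi ha (by linarith) (by linarith)

lemma bddAbove_range_cos_sub (θ : ℝ) (a : ℤ → ℝ) :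
    BddAbove (range fun k => Real.cos (θ - a k)) :=
  ⟨1, by rintro _ ⟨k, rfl⟩; exact Real.cos_le_one _⟩

section pskMaxCos

variable {M : ℕ} {θ : ℝ}

lemma cos_le_pskMaxCos (M : ℕ) (θ : ℝ) (k : ℤ) :
    Real.cos (θ - 2 * π * k / M) ≤ pskMaxCos M θ :=
  le_ciSup (f := fun k : ℤ => Real.cos (θ - 2 * π * k / M))
    (bddAbove_range_cos_sub θ fun k => 2 * π * k / M) k

lemma pskMaxCos_le {c : ℝ} (h : ∀ k : ℤ, Real.cos (θ - 2 * π * k / M) ≤ c) :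
    pskMaxCos M θ ≤ c :=
  ciSup_le h

lemma pskMaxCos_periodic (M : ℕ) : Function.Periodic (pskMaxCos M) (2 * π / M) := by
  intro θ
  rw [pskMaxCos, pskMaxCos, ← (Equiv.addRight 1).iSup_comp]
  congr 1
  ext k
  rw [Equiv.coe_addRight]
  push_cast
  ring_nf

lemma lipschitzWith_pskMaxCos (M : ℕ) : LipschitzWith 1 (pskMaxCos M) :=
  LipschitzWith.of_le_add fun θ θ' => pskMaxCos_le fun k => by
    have hcos := Real.abs_cos_sub_cos_le (θ - 2 * π * k / M) (θ' - 2 * π * k / M)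
    rw [show θ - 2 * π * k / M - (θ' - 2 * π * k / M) = θ - θ' by ring] at hcos
    rw [Real.dist_eq]
    linarith [cos_le_pskMaxCos M θ' k, (abs_le.1 hcos).2]

lemma pskMaxCos_eq_cos (hM : 0 < M) (hθ : |θ| ≤ π / M) : pskMaxCos M θ = Real.cos θ := by
  refine le_antisymm (pskMaxCos_le fun k => ?_) (by simpa using cos_le_pskMaxCos M θ 0)
  obtain ⟨n, hnM, hn⟩ := Real.exists_cos_sub_two_pi_mul_int_div_eq hM θ k
  rw [hn]
  rcases Nat.eq_zero_or_pos n with rfl | hn0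
  · simp
  have hM1 : (1 : ℝ) ≤ M := by exact_mod_cast hM
  have hn1 : (1 : ℝ) ≤ n := by exact_mod_cast hn0
  have hnM' : (n : ℝ) + 1 ≤ M := by exact_mod_cast hnM
  have hπM : π / M ≤ π := div_le_self pi_pos.le hM1
  have hangle : 2 * π * n / M = 2 * (π / M) * n := by ring
  have hlow : 2 * (π / M) ≤ 2 * (π / M) * n := le_mul_of_one_le_right (by positivity) hn1
  have hhigh : 2 * (π / M) * n ≤ 2 * π - 2 * (π / M) := by
    rw [show 2 * π - 2 * (π / M) = 2 * (π / M) * (M - 1) by field_simp]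
    gcongr
    linarith
  obtain ⟨hθl, hθr⟩ := abs_le.1 hθ
  calc Real.cos (θ - 2 * π * n / M) = Real.cos (2 * π * n / M - θ) := by
        rw [← Real.cos_neg, neg_sub]
    _ ≤ Real.cos (π / M) :=
        Real.cos_le_cos_of_le_of_le_two_pi_sub (by positivity) (by linarith) (by linarith)
    _ ≤ Real.cos θ := by
        rw [← Real.cos_abs θ]
        exact Real.cos_le_cos_of_nonneg_of_le_pi (abs_nonneg θ) hπM hθ

lemma integral_pskMaxCos (hM : 0 < M) :
    ∫ θ in -π..π, pskMaxCos M θ = 2 * M * Real.sin (π / M) := by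
  have hM' : (M : ℝ) ≠ 0 := by exact_mod_cast hM.ne'
  have hint : ∀ a b : ℝ, IntervalIntegrable (pskMaxCos M) volume a b := fun a b =>
    (lipschitzWith_pskMaxCos M).continuous.intervalIntegrable a b
  have hsector : ∫ θ in -(π / M)..π / M, pskMaxCos M θ = 2 * Real.sin (π / M) := by
    rw [intervalIntegral.integral_congr (g := Real.cos) fun θ hθ => pskMaxCos_eq_cos hM ?_,
      integral_cos, Real.sin_neg]
    · ring
    · rw [uIcc_of_le (by linarith [show 0 ≤ π / M by positivity])] at hθ
      exact abs_le.2 hθ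
  calc ∫ θ in -π..π, pskMaxCos M θ
      = ∫ θ in -π..-π + (M : ℤ) • (2 * π / M), pskMaxCos M θ := by
        congr 1; rw [zsmul_eq_mul]; push_cast; field_simp; ring
    _ = (M : ℤ) • ∫ θ in -(π / M)..-(π / M) + 2 * π / M, pskMaxCos M θ := by
        rw [(pskMaxCos_periodic M).intervalIntegral_add_zsmul_eq _ _ hint,
          (pskMaxCos_periodic M).intervalIntegral_add_eq (-π) (-(π / M))]
    _ = 2 * M * Real.sin (π / M) := by
        rw [show -(π / M) + 2 * π / M = π / M by ring, hsector, zsmul_eq_mul]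
        push_cast
        ring

end pskMaxCos

lemma re_conj_mul_eq_pskMaxCos {M : ℕ} {r θ : ℝ} {x : ℂ} (hr : 0 ≤ r)
    (hx : x ∈ pskConstellation M)
    (hmin : ∀ y ∈ pskConstellation M, ‖r * exp (θ * I) - x‖ ≤ ‖r * exp (θ * I) - y‖) :
    (conj (r * exp (θ * I)) * x).re = r * pskMaxCos M θ := by
  have hpoint : ∀ n : ℕ, exp (I * (2 * π * n / M)) = exp ((2 * π * n / M : ℝ) * I) := fun n => by
    push_cast; ring_nf
  obtain ⟨k, hkM, rfl⟩ := hx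
  rw [hpoint, re_conj_mul_exp_mul_I]
  refine le_antisymm ?_ ?_
  · exact mul_le_mul_of_nonneg_left (by exact_mod_cast cos_le_pskMaxCos M θ k) hr
  · rw [pskMaxCos, Real.mul_iSup_of_nonneg hr]
    refine ciSup_le fun j => ?_
    obtain ⟨n, hnM, hn⟩ := Real.exists_cos_sub_two_pi_mul_int_div_eq (Nat.zero_lt_of_lt hkM) θ j
    have hnear := re_conj_mul_le_of_norm_sub_le (by rw [hpoint, hpoint,
      norm_exp_ofReal_mul_I, norm_exp_ofReal_mul_I]) (hmin _ ⟨n, hnM, rfl⟩)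
    simp only [hpoint, re_conj_mul_exp_mul_I] at hnear
    rwa [hn]

lemma integral_Ioi_sq_mul_exp_neg_sq :
    ∫ r in Ioi (0 : ℝ), r ^ 2 * Real.exp (-r ^ 2) = √π / 4 := by
  have hrpow : EqOn (fun r : ℝ => r ^ 2 * Real.exp (-r ^ 2))
      (fun r => r ^ (2 : ℝ) * Real.exp (-r ^ (2 : ℝ))) (Ioi 0) := fun r _ => by
    simp only [Real.rpow_two]
  rw [setIntegral_congr_fun measurableSet_Ioi hrpow,
    integral_rpow_mul_exp_neg_rpow two_pos (by norm_num),
    show ((2 : ℝ) + 1) / 2 = 1 / 2 + 1 by norm_num, Real.Gamma_add_one (by norm_num),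
    Real.Gamma_one_half_eq]
  ring

lemma integral_mul_gaussian_of_eq_mul_angular (f : ℂ → ℝ) (S : ℝ → ℝ)
    (hf : ∀ r θ : ℝ, 0 < r → f (r * exp (θ * I)) = r * S θ) :
    ∫ z : ℂ, f z * ((1 / π) * Real.exp (-‖z‖ ^ 2)) = √π / (4 * π) * ∫ θ in -π..π, S θ := by
  have hpolar : EqOn (fun p : ℝ × ℝ => p.1 • (f (Complex.polarCoord.symm p) *
        ((1 / π) * Real.exp (-‖Complex.polarCoord.symm p‖ ^ 2))))
      (fun p => p.1 ^ 2 * Real.exp (-p.1 ^ 2) * ((1 / π) * S p.2)) polarCoord.target := by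
    rintro ⟨r, θ⟩ ⟨hr : 0 < r, -⟩
    have hsymm : Complex.polarCoord.symm (r, θ) = r * exp (θ * I) := by
      rw [Complex.polarCoord_symm_apply, exp_mul_I]
      push_cast
      rfl
    simp only [smul_eq_mul, hsymm, hf r θ hr, norm_mul, norm_real, norm_exp_ofReal_mul_I,
      Real.norm_eq_abs, abs_of_pos hr, mul_one]
    ring
  rw [← Complex.integral_comp_polarCoord_symm, setIntegral_congr_fun
    polarCoord.open_target.measurableSet hpolar,
    show polarCoord.target = Ioi (0 : ℝ) ×ˢ Ioo (-π) π from rfl,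
    Measure.volume_eq_prod, ← Measure.prod_restrict,
    integral_prod_mul (fun r => r ^ 2 * Real.exp (-r ^ 2)) fun θ => 1 / π * S θ,
    integral_Ioi_sq_mul_exp_neg_sq, integral_const_mul,
    intervalIntegral.integral_of_le (by linarith [pi_pos]), integral_Ioc_eq_integral_Ioo]
  ring

theorem stmt_10_general (M : ℕ)
    (X : Set ℂ)
    (hX : X = {x : ℂ | ∃ k : ℕ, k < M ∧ x = Complex.exp (Complex.I * (2 * Real.pi * k / M))})
    (xhat : ℂ → ℂ)
    (hmem : ∀ z, xhat z ∈ X)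
    (hmin : ∀ z, ∀ x ∈ X, ‖z - xhat z‖ ≤ ‖z - x‖) :
    ∫ z : ℂ, ((starRingEnd ℂ) z * xhat z).re *
        ((1 / Real.pi) * Real.exp (-(‖z‖) ^ 2))
      = M * Real.sin (Real.pi / M) / (2 * Real.sqrt Real.pi) := by
  subst hX
  have hM : 0 < M := by
    obtain ⟨k, hkM, -⟩ := hmem 0
    omega
  rw [integral_mul_gaussian_of_eq_mul_angular _ (pskMaxCos M)
    fun r θ hr => re_conj_mul_eq_pskMaxCos hr.le (hmem _) (hmin _), integral_pskMaxCos hM]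
  have hsqrt : √π * √π = π := Real.mul_self_sqrt pi_pos.le
  field_simp
  linear_combination 4 * Real.sin (π / M) * hsqrt

theorem stmt_10 (M : ℕ) (hM : 2 ≤ M)
    (X : Set ℂ)
    (hX : X = {x : ℂ | ∃ k : ℕ, k < M ∧ x = Complex.exp (Complex.I * (2 * Real.pi * k / M))})
    (xhat : ℂ → ℂ)
    (hmem : ∀ z, xhat z ∈ X)
    (hmin : ∀ z, ∀ x ∈ X, ‖z - xhat z‖ ≤ ‖z - x‖) :
    ∫ z : ℂ, ((starRingEnd ℂ) z * xhat z).re *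
        ((1 / Real.pi) * Real.exp (-(‖z‖) ^ 2))
      = M * Real.sin (Real.pi / M) / (2 * Real.sqrt Real.pi) :=
  stmt_10_general M X hX xhat hmem hmin
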